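/- The limit of Ω(δ) as δ tends to 1/2 (with δ ranging over real numbers in (0,1) different from 1/2) exists and equals 1 + (log 4 − 2)/π. -/

import Mathlib

open MeasureTheory

/-- The function Ω from the paper: for δ < 1, δ ≠ 1/2,
`Ω(δ) = (1/π) ∫₀¹ (1/(1+√(1−r))) (1−r)^(−1/2) ((1/(1−2δ))(r^(−1/2) − r^(−δ)) + r^(1/2−δ)) dr`. -/
noncomputable def Omega (δ : ℝ) : ℝ :=
  (1 / Real.pi) *
    ∫ r in Set.Ioo (0:ℝ) 1,
      (1 / (1 + Real.sqrt (1 - r))) * (1 - r) ^ (-(1:ℝ)/2) *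
        ((1 / (1 - 2*δ)) * (r ^ (-(1:ℝ)/2) - r ^ (-δ)) + r ^ ((1:ℝ)/2 - δ))

/-!
As `δ → 1/2` the integrand of `Ω(δ)` converges pointwise to
`w(r) (1 - log r / (2 √r))`, where `w(r) = (1 + √(1-r))⁻¹ (1-r)^(-1/2)`: the singular factor
`(r^(-1/2) - r^(-δ)) / (1 - 2δ)` is half a difference quotient of `δ ↦ r^(-δ)` at `1/2`.
By the mean value theorem this quotient is at most `(-log r) r^(-3/4) / 2 ≤ 4 r^(-7/8)` for
`δ ≤ 3/4`, so all integrands are dominated by `5 r^(-7/8) (1-r)^(-1/2)`, which is integrable like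
a Beta integrand, and dominated convergence applies. The limit integral is evaluated with the
antiderivative `-2 log(1 + √(1-r)) - 2 √r (log √r + 1) / (1 + √(1-r)) + 2 arcsin √r`, which
runs from `-log 4` at `0` to `π - 2` at `1`.
-/

open Set Real Filter Topology

lemma integrableOn_rpow_mul_one_sub_rpow {a b : ℝ} (ha : -1 < a) (hb : -1 < b) :
    IntegrableOn (fun r : ℝ => r ^ a * (1 - r) ^ b) (Ioo 0 1) := by
  have hbeta := (Complex.betaIntegral_convergent (u := a + 1) (v := b + 1)
    (by simp; linarith) (by simp; linarith)).norm
  rw [intervalIntegrable_iff_integrableOn_Ioo_of_le zero_le_one] at hbeta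
  refine hbeta.congr_fun (fun r hr => ?_) measurableSet_Ioo
  have h1r : 0 < 1 - r := sub_pos.2 hr.2
  simp only [add_sub_cancel_right, norm_mul]
  rw [Complex.norm_cpow_eq_rpow_re_of_pos hr.1, ← Complex.ofReal_one, ← Complex.ofReal_sub,
    Complex.norm_cpow_eq_rpow_re_of_pos h1r]
  simp

lemma neg_log_le_rpow_neg_div {r ε : ℝ} (hr : 0 < r) (hε : 0 < ε) :
    -log r ≤ r ^ (-ε) / ε := by
  simpa [log_inv, inv_rpow hr.le, rpow_neg hr.le] using log_le_rpow_div (inv_nonneg.2 hr.le) hε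

lemma abs_rpow_neg_sub_rpow_neg_le {r a b c : ℝ} (hr₀ : 0 < r) (hr₁ : r ≤ 1) (ha : a ≤ c)
    (hb : b ≤ c) : |r ^ (-a) - r ^ (-b)| ≤ -log r * r ^ (-c) * |a - b| := by
  have hlog : log r ≤ 0 := log_nonpos hr₀.le hr₁
  have hderiv : ∀ x ∈ Iic c,
      HasDerivWithinAt (fun x : ℝ => r ^ (-x)) (log r * -1 * r ^ (-x)) (Iic c) x :=
    fun x _ => (hasDerivWithinAt_neg x _).const_rpow hr₀
  have hbound : ∀ x ∈ Iic c, ‖log r * -1 * r ^ (-x)‖ ≤ -log r * r ^ (-c) := fun x hx => by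
    rw [mul_neg_one, norm_mul, norm_neg, norm_of_nonpos hlog,
      norm_of_nonneg (rpow_nonneg hr₀.le _)]
    exact mul_le_mul_of_nonneg_left (rpow_le_rpow_of_exponent_ge hr₀ hr₁ (neg_le_neg hx))
      (neg_nonneg.2 hlog)
  simpa [Real.norm_eq_abs] using
    (convex_Iic c).norm_image_sub_le_of_norm_hasDerivWithin_le hderiv hbound hb ha

lemma rpow_neg_half_eq_inv_sqrt {x : ℝ} (hx : 0 ≤ x) : x ^ (-(1:ℝ)/2) = (√x)⁻¹ := by
  rw [sqrt_eq_rpow, neg_div, rpow_neg hx]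

namespace Omega

noncomputable def weight (r : ℝ) : ℝ := 1 / (1 + √(1 - r)) * (1 - r) ^ (-(1:ℝ)/2)

noncomputable def diffQuot (δ r : ℝ) : ℝ := 1 / (1 - 2*δ) * (r ^ (-(1:ℝ)/2) - r ^ (-δ))

noncomputable def integrand (δ r : ℝ) : ℝ := weight r * (diffQuot δ r + r ^ ((1:ℝ)/2 - δ))

noncomputable def limitIntegrand (r : ℝ) : ℝ := weight r * (-log r * r ^ (-(1:ℝ)/2) / 2 + 1)

noncomputable def majorant (r : ℝ) : ℝ := 5 * (r ^ (-(7:ℝ)/8) * (1 - r) ^ (-(1:ℝ)/2))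

lemma weight_nonneg {r : ℝ} (hr : r ≤ 1) : 0 ≤ weight r := by
  unfold weight
  have := rpow_nonneg (sub_nonneg.2 hr) (-(1:ℝ)/2)
  positivity

lemma weight_le {r : ℝ} (hr : r ≤ 1) : weight r ≤ (1 - r) ^ (-(1:ℝ)/2) :=
  mul_le_of_le_one_left (rpow_nonneg (sub_nonneg.2 hr) _)
    ((div_le_one (by positivity)).2 (le_add_of_nonneg_right (sqrt_nonneg _)))

lemma abs_diffQuot_le {δ r : ℝ} (hδ : δ ≤ 3/4) (hr₀ : 0 < r) (hr₁ : r ≤ 1) :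
    |diffQuot δ r| ≤ 4 * r ^ (-(7:ℝ)/8) := by
  have hhalf : |1 / (1 - 2*δ)| * |1/2 - δ| ≤ 1/2 := by
    rcases eq_or_ne δ (1/2) with rfl | hδ'
    · norm_num
    · have h : 1 - 2*δ ≠ 0 := fun h => hδ' (by linarith)
      rw [← abs_mul, div_mul_eq_mul_div, one_mul, show 1/2 - δ = (1 - 2*δ) / 2 by ring,
        div_div_cancel_left' h]
      norm_num
  have hlog := neg_log_le_rpow_neg_div hr₀ (show (0:ℝ) < 1/8 by norm_num)
  have hdiff := abs_rpow_neg_sub_rpow_neg_le hr₀ hr₁ (show (1:ℝ)/2 ≤ 3/4 by norm_num) hδ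
  rw [← neg_div, ← neg_div] at hdiff
  rw [← neg_div] at hlog
  calc |diffQuot δ r|
      ≤ |1 / (1 - 2*δ)| * (-log r * r ^ (-(3:ℝ)/4) * |1/2 - δ|) := by
        rw [diffQuot, abs_mul]; gcongr
    _ = -log r * r ^ (-(3:ℝ)/4) * (|1 / (1 - 2*δ)| * |1/2 - δ|) := by ring
    _ ≤ r ^ (-(1:ℝ)/8) / (1/8) * r ^ (-(3:ℝ)/4) * (1/2) := by gcongr
    _ = 4 * r ^ (-(7:ℝ)/8) := by
        rw [show -(7:ℝ)/8 = -1/8 + -3/4 by norm_num, rpow_add hr₀]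
        ring

lemma norm_integrand_le {δ r : ℝ} (hδ : δ ≤ 3/4) (hr : r ∈ Ioo 0 1) :
    ‖integrand δ r‖ ≤ majorant r := by
  obtain ⟨hr₀, hr₁⟩ := hr
  have hpow : r ^ ((1:ℝ)/2 - δ) ≤ r ^ (-(7:ℝ)/8) :=
    rpow_le_rpow_of_exponent_ge hr₀ hr₁.le (by linarith)
  have hsum : |diffQuot δ r + r ^ ((1:ℝ)/2 - δ)| ≤ 5 * r ^ (-(7:ℝ)/8) := by
    calc _ ≤ |diffQuot δ r| + |r ^ ((1:ℝ)/2 - δ)| := abs_add_le _ _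
      _ ≤ 4 * r ^ (-(7:ℝ)/8) + r ^ (-(7:ℝ)/8) := by
        rw [abs_of_nonneg (rpow_nonneg hr₀.le _)]
        exact add_le_add (abs_diffQuot_le hδ hr₀ hr₁.le) hpow
      _ = 5 * r ^ (-(7:ℝ)/8) := by ring
  rw [integrand, norm_mul, norm_of_nonneg (weight_nonneg hr₁.le), majorant, Real.norm_eq_abs]
  calc _ ≤ (1 - r) ^ (-(1:ℝ)/2) * (5 * r ^ (-(7:ℝ)/8)) :=
        mul_le_mul (weight_le hr₁.le) hsum (abs_nonneg _) (rpow_nonneg (by linarith) _)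
    _ = _ := by ring

lemma integrableOn_majorant : IntegrableOn majorant (Ioo 0 1) :=
  (integrableOn_rpow_mul_one_sub_rpow (by norm_num) (by norm_num)).const_mul 5

lemma measurable_integrand (δ : ℝ) : Measurable (integrand δ) := by
  unfold integrand weight diffQuot
  fun_prop

lemma tendsto_diffQuot {r : ℝ} (hr : 0 < r) :
    Tendsto (diffQuot · r) (𝓝[≠] (1/2)) (𝓝 (-log r * r ^ (-(1:ℝ)/2) / 2)) := by
  have hderiv : HasDerivAt (fun δ : ℝ => r ^ (-δ)) (log r * -1 * r ^ (-(1/2 : ℝ))) (1/2) :=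
    (hasDerivAt_neg _).const_rpow hr
  have hslope := (hasDerivAt_iff_tendsto_slope.1 hderiv).div_const 2
  rw [← neg_div] at hslope
  convert hslope using 2 with δ
  · rw [diffQuot, slope_def_field, ← neg_div]
    rcases eq_or_ne δ (1/2) with rfl | hδ
    · norm_num
    · have h₁ : δ - 1/2 ≠ 0 := sub_ne_zero.2 hδ
      have h₂ : 1 - 2*δ ≠ 0 := fun h => hδ (by linarith)
      rw [one_div_mul_eq_div, div_div, div_eq_div_iff h₂ (mul_ne_zero h₁ two_ne_zero)]
      ring
  · ring

lemma tendsto_integrand {r : ℝ} (hr : 0 < r) :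
    Tendsto (integrand · r) (𝓝[≠] (1/2)) (𝓝 (limitIntegrand r)) := by
  have hpow : Tendsto (fun δ : ℝ => r ^ ((1:ℝ)/2 - δ)) (𝓝[≠] (1/2)) (𝓝 1) := by
    have : Continuous (fun δ : ℝ => r ^ ((1:ℝ)/2 - δ)) := by fun_prop (disch := exact hr.ne')
    simpa using this.tendsto (1/2) |>.mono_left nhdsWithin_le_nhds
  exact ((tendsto_diffQuot hr).add hpow).const_mul (weight r)

lemma eventually_le_three_quarters : ∀ᶠ δ : ℝ in 𝓝[≠] (1/2), δ ≤ 3/4 :=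
  eventually_nhdsWithin_of_eventually_nhds (eventually_le_nhds (by norm_num : (1:ℝ)/2 < 3/4))

lemma eventually_norm_integrand_le :
    ∀ᶠ δ in 𝓝[≠] (1/2), ∀ᵐ r ∂volume.restrict (Ioo 0 1), ‖integrand δ r‖ ≤ majorant r := by
  filter_upwards [eventually_le_three_quarters] with δ hδ
  filter_upwards [ae_restrict_mem measurableSet_Ioo] with r hr
  exact norm_integrand_le hδ hr

lemma ae_tendsto_integrand :
    ∀ᵐ r ∂volume.restrict (Ioo 0 1),
      Tendsto (integrand · r) (𝓝[≠] (1/2)) (𝓝 (limitIntegrand r)) := by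
  filter_upwards [ae_restrict_mem measurableSet_Ioo] with r hr
  exact tendsto_integrand hr.1

lemma integrableOn_limitIntegrand : IntegrableOn limitIntegrand (Ioo 0 1) := by
  refine integrableOn_majorant.mono'
    (aestronglyMeasurable_of_tendsto_ae _ (fun δ => (measurable_integrand δ).aestronglyMeasurable)
      ae_tendsto_integrand) ?_
  filter_upwards [ae_restrict_mem measurableSet_Ioo] with r hr
  exact le_of_tendsto (tendsto_integrand hr.1).norm <|
    eventually_le_three_quarters.mono fun δ hδ => norm_integrand_le hδ hr

lemma tendsto_integral_integrand :
    Tendsto (fun δ => ∫ r in Ioo 0 1, integrand δ r) (𝓝[≠] (1/2))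
      (𝓝 (∫ r in Ioo 0 1, limitIntegrand r)) :=
  tendsto_integral_filter_of_dominated_convergence majorant
    (.of_forall fun δ => (measurable_integrand δ).aestronglyMeasurable)
    eventually_norm_integrand_le integrableOn_majorant ae_tendsto_integrand

-- Writing `√r * log √r` rather than `√r * log r / 2` makes this continuous on all of `ℝ`,
-- via `continuous_mul_log`.
noncomputable def primitive (r : ℝ) : ℝ :=
  -2 * log (1 + √(1 - r)) - 2 * (√r * log √r + √r) / (1 + √(1 - r)) + 2 * arcsin √r

lemma continuous_primitive : Continuous primitive := by
  have hden_ne : ∀ r : ℝ, 1 + √(1 - r) ≠ 0 := fun r => by positivity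
  unfold primitive
  fun_prop (disch := exact hden_ne _)

lemma primitive_zero : primitive 0 = -log 4 := by
  rw [show (4:ℝ) = 2 ^ 2 by norm_num, log_pow]
  norm_num [primitive]

lemma primitive_one : primitive 1 = π - 2 := by
  norm_num [primitive]
  ring

lemma hasDerivAt_primitive {r : ℝ} (hr : r ∈ Ioo 0 1) :
    HasDerivAt primitive (limitIntegrand r) r := by
  obtain ⟨hr₀, hr₁⟩ := hr
  have h1r : 0 < 1 - r := sub_pos.2 hr₁
  have hs : 0 < √r := sqrt_pos.2 hr₀
  have hu : 0 < √(1 - r) := sqrt_pos.2 h1r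
  have hds : HasDerivAt (√·) (1 / (2 * √r)) r := hasDerivAt_sqrt hr₀.ne'
  have hden : HasDerivAt (fun x => 1 + √(1 - x)) (-(1 / (2 * √(1 - r)))) r := by
    simpa using ((hasDerivAt_sqrt h1r.ne').comp r ((hasDerivAt_id r).const_sub 1)).const_add 1
  have hlog := hden.log (by positivity)
  have hnum := (hds.mul (hds.log hs.ne')).add hds
  have harcsin :=
    (hasDerivAt_arcsin (x := √r) (by linarith) (by nlinarith [sq_sqrt hr₀.le])).comp r hds
  refine HasDerivAt.congr_deriv (f := primitive) (((hlog.const_mul (-2)).sub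
    ((hnum.const_mul 2).div hden (by positivity))).add (harcsin.const_mul 2)) ?_
  simp only [Pi.add_apply, Pi.mul_apply]
  rw [limitIntegrand, weight, rpow_neg_half_eq_inv_sqrt h1r.le, rpow_neg_half_eq_inv_sqrt hr₀.le,
    sq_sqrt hr₀.le, log_sqrt hr₀.le]
  have hs2 := sq_sqrt hr₀.le
  have hu2 := sq_sqrt h1r.le
  generalize √r = s at *
  generalize √(1 - r) = u at *
  subst hs2
  field_simp
  linear_combination -(2 + log (s ^ 2)) * hu2

lemma integral_limitIntegrand : ∫ r in Ioo 0 1, limitIntegrand r = π - 2 + log 4 := by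
  have hint : IntervalIntegrable limitIntegrand volume 0 1 :=
    (intervalIntegrable_iff_integrableOn_Ioo_of_le zero_le_one).2 integrableOn_limitIntegrand
  have hftc := intervalIntegral.integral_eq_sub_of_hasDerivAt_of_le zero_le_one
    continuous_primitive.continuousOn (fun r hr => hasDerivAt_primitive hr) hint
  rw [intervalIntegral.integral_of_le zero_le_one, integral_Ioc_eq_integral_Ioo, primitive_one,
    primitive_zero] at hftc
  rw [hftc]
  ring

end Omega

theorem Omega_tendsto_half :
    Filter.Tendsto Omega (nhdsWithin (1/2 : ℝ) (Set.Ioo (0:ℝ) 1 \ {1/2}))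
      (nhds (1 + (Real.log 4 - 2) / Real.pi)) := by
  have hfilter : 𝓝[Ioo (0:ℝ) 1 \ {1/2}] (1/2) = 𝓝[≠] (1/2) := by
    rw [sdiff_eq, nhdsWithin_inter_of_mem
      (mem_nhdsWithin_of_mem_nhds (Ioo_mem_nhds (by norm_num) (by norm_num)))]
  have hvalue : 1 + (log 4 - 2) / π = 1 / π * (π - 2 + log 4) := by
    field_simp
    ring
  rw [hfilter, hvalue, ← Omega.integral_limitIntegrand]
  exact Omega.tendsto_integral_integrand.const_mul (1 / π)
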